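/- arXiv:1404.5224 — 2 statements merged into one kernel-verified Lean document; each statement's English description precedes it below -/
import Mathlib

section
/- Let k ≥ 1, n ≥ 1 and q ∈ ℚ with q ∉ {0, −1, −2, …, −(n−2)} (so that B_{j}(q) ≠ 0 for 0 ≤ j ≤ n−2). Let Sₙ(q) be the n×n Hessenberg matrix over ℚ[t₁,…,t_k] with entries (Sₙ)_{i,1} = B₀(q)·t_i = q·t_i, (Sₙ)_{i,j} = (1/i)·((i−j+1)·B_{j−1}(q)/B_{j−2}(q) − (j−1)(i−j))·t_{i−j+1} for 2 ≤ j ≤ i, (Sₙ)_{i,i+1} = −1, and all other entries 0. Then det Sₙ(q) = F^q_{k,n}. -/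
open Finset MvPolynomial

/-- The set of partitions `α ⊢ n` with parts at most `k`, encoded as tuples
`α = (α₁, …, α_k) ∈ ℕ^k` (0-indexed) with `∑ j, (j+1)·α_j = n`. -/
def partitions (k n : ℕ) : Finset (Fin k → ℕ) :=
  (Fintype.piFinset fun _ : Fin k => Finset.range (n + 1)).filter
    fun α => ∑ j : Fin k, (j.1 + 1) * α j = n

/-- The variable `t_{m+1}` of `ℚ[t₁,…,t_k]` (0-indexed), with the convention
`t_j = 0` for `j > k`. -/
noncomputable def tQ (k m : ℕ) : MvPolynomial (Fin k) ℚ :=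
  if h : m < k then X ⟨m, h⟩ else 0

/-- The Stirling operator of the first kind: `B q m = q(q+1)⋯(q+m-1)`, i.e.
`B q m = B_{m-1}(q)` in the paper's notation, with `B q 0 = B_{-1}(q) = 1`. -/
def B (q : ℚ) (m : ℕ) : ℚ := ∏ i ∈ Finset.range m, (q + i)

/-- The `q`-th convolution root of the generalized Fibonacci polynomial:
`F^q_{k,n} = ∑_{α ⊢ n} (B_{|α|-1}(q) / (α₁!⋯α_k!)) · t^α`, with `F^q_{k,0} = 1`. -/
noncomputable def Fq (k : ℕ) (q : ℚ) (n : ℕ) : MvPolynomial (Fin k) ℚ :=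
  if n = 0 then 1 else
    ∑ α ∈ partitions k n,
      C (B q (∑ j, α j) / ∏ j, ((α j).factorial : ℚ)) * ∏ j, X j ^ α j

/-- The `n×n` Hessenberg–Stirling matrix `Sₙ(q)` (0-indexed): the first column is
`q·t_i`, for 1-based indices `i, j` with `2 ≤ j ≤ i` the entry is
`(1/i)·((i-j+1)·B_{j-1}(q)/B_{j-2}(q) - (j-1)(i-j))·t_{i-j+1}`
(in the paper's notation; here `B_{j-1}(q)/B_{j-2}(q) = B q j / B q (j-1)`),
the superdiagonal entries are `-1`, and all other entries are `0`. -/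
noncomputable def Smat (k n : ℕ) (q : ℚ) : Matrix (Fin n) (Fin n) (MvPolynomial (Fin k) ℚ) :=
  fun i j =>
    if j.1 = 0 then C q * tQ k i.1
    else if j.1 ≤ i.1 then
      C ((((i.1 - j.1 + 1 : ℕ) : ℚ) * (B q (j.1 + 1) / B q j.1)
            - (j.1 : ℚ) * ((i.1 - j.1 : ℕ) : ℚ)) / ((i.1 : ℚ) + 1)) * tQ k (i.1 - j.1)
    else if j.1 = i.1 + 1 then -1
    else 0

/-!
`Sₙ(q)` is lower Hessenberg with `-1` on the superdiagonal, so expanding along the last row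
gives `det S_{n+1} = ∑_{j ≤ n} (S_{n+1})_{n,j} · det S_j`: each minor is block lower triangular
with the leading block `S_j` and `-1`s on the diagonal of the other block. Since
`q ∉ {0, -1, …, -(n-2)}`, the ratios simplify to `B_{j-1}(q)/B_{j-2}(q) = q + j - 1` and the
entries become `((i-j+1)q + j-1)/i · t_{i-j+1}` (1-based). It therefore suffices that
`F_n := F^q_{k,n}` satisfies `n F_n = ∑_{m=1}^{n} (m q + n - m) t_m F_{n-m}`, the coefficientwise
form of `(1 - T) F' = q T' F` for `F = (1 - T)^{-q}`, `T = ∑ t_m x^m`. This is checked monomial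
by monomial: the partitions of `n - m` are those of `n` with one part `m` removed, and for
`α ⊢ n` one has `∑_m (m q + n - m) α_m = n (q + |α| - 1)`, which turns `B_{|α|-2}(q)` into
`B_{|α|-1}(q)`.
-/

section Hessenberg

variable {R : Type*} [CommRing R]

def hessenberg (a : ℕ → ℕ → R) (n : ℕ) : Matrix (Fin n) (Fin n) R :=
  Matrix.of fun i j => if j.1 ≤ i.1 then a i j else if j.1 = i.1 + 1 then -1 else 0

lemma Fin.val_succAbove {n : ℕ} (j : Fin (n + 1)) (c : Fin n) :
    (j.succAbove c).1 = if c.1 < j.1 then c.1 else c.1 + 1 := by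
  split_ifs with h
  · rw [Fin.succAbove_of_castSucc_lt _ _ h, Fin.val_castSucc]
  · rw [Fin.succAbove_of_le_castSucc _ _ (not_lt.1 h), Fin.val_succ]

lemma det_hessenberg_submatrix_castSucc_succAbove (a : ℕ → ℕ → R) {n : ℕ} (j : Fin (n + 1)) :
    ((hessenberg a (n + 1)).submatrix Fin.castSucc j.succAbove).det
      = (-1) ^ (n - j) * (hessenberg a j).det := by
  let e : Fin j ⊕ Fin (n - j) ≃ Fin n := finSumFinEquiv.trans (finCongr (by omega))
  rw [← Matrix.det_submatrix_equiv_self e]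
  set N := ((hessenberg a (n + 1)).submatrix Fin.castSucc j.succAbove).submatrix e e
  have h₁₁ : N.toBlocks₁₁ = hessenberg a j := by
    ext r c
    simp only [N, Matrix.toBlocks₁₁, Matrix.of_apply, Matrix.submatrix_apply, e, hessenberg]
    simp [Fin.val_succAbove]
  have h₁₂ : N.toBlocks₁₂ = 0 := by
    ext r c
    simp only [N, Matrix.toBlocks₁₂, Matrix.of_apply, Matrix.submatrix_apply, e, hessenberg]
    have := r.isLt
    simp [Fin.val_succAbove, show ¬(j : ℕ) + c < r by omega, show (j : ℕ) + c ≠ r by omega]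
  have h₂₂ : N.toBlocks₂₂.det = (-1) ^ (n - j) := by
    rw [Matrix.det_of_isLowerTriangular]
    · simp only [N, Matrix.toBlocks₂₂, Matrix.of_apply, Matrix.submatrix_apply, e, hessenberg]
      simp [Fin.val_succAbove]
    · intro r c hrc
      rw [OrderDual.toDual_lt_toDual, Fin.lt_def] at hrc
      simp only [N, Matrix.toBlocks₂₂, Matrix.of_apply, Matrix.submatrix_apply, e, hessenberg]
      simp [Fin.val_succAbove, show ¬c < r by omega, show (c : ℕ) ≠ r by omega]
  rw [← N.fromBlocks_toBlocks, h₁₂, Matrix.det_fromBlocks_zero₁₂, h₁₁, h₂₂, mul_comm]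

theorem det_hessenberg_succ (a : ℕ → ℕ → R) (n : ℕ) :
    (hessenberg a (n + 1)).det = ∑ j : Fin (n + 1), a n j * (hessenberg a j).det := by
  rw [Matrix.det_succ_row _ (Fin.last n), Fin.succAbove_last]
  refine Finset.sum_congr rfl fun j _ => ?_
  have hsign : (-1 : R) ^ (n + j.1) * (-1) ^ (n - j.1) = 1 := by
    rw [← pow_add, Even.neg_one_pow ⟨n, by omega⟩]
  rw [det_hessenberg_submatrix_castSucc_succAbove, hessenberg, Matrix.of_apply, Fin.val_last,
    if_pos (Nat.lt_succ_iff.1 j.2)]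
  linear_combination (a n j * (hessenberg a j).det) * hsign

end Hessenberg

section PiSingle

variable {ι : Type*} [DecidableEq ι]

lemma sub_single_add_single {β : ι → ℕ} {p : ι} (hp : 0 < β p) :
    β - Pi.single p 1 + Pi.single p 1 = β := by
  funext j
  rcases eq_or_ne j p with rfl | hj
  · simp only [Pi.add_apply, Pi.sub_apply, Pi.single_eq_same]
    omega
  · simp [hj]

variable [Fintype ι]

lemma prod_pow_add_single {M : Type*} [CommMonoid M] (f : ι → M) (β : ι → ℕ) (p : ι) :
    ∏ j, f j ^ (β + Pi.single p 1 : ι → ℕ) j = f p * ∏ j, f j ^ β j := by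
  have hsingle : ∏ j, f j ^ (Pi.single p 1 : ι → ℕ) j = f p :=
    (Fintype.prod_eq_single p fun j hj => by simp [hj]).trans (by simp)
  simp only [Pi.add_apply, pow_add, Finset.prod_mul_distrib, hsingle, mul_comm]

lemma prod_factorial_add_single (β : ι → ℕ) (p : ι) :
    ∏ j, ((β + Pi.single p 1 : ι → ℕ) j).factorial = (β p + 1) * ∏ j, (β j).factorial := by
  have hfac : ∀ j, ((β + Pi.single p 1 : ι → ℕ) j).factorial
      = (β j + 1) ^ (Pi.single p 1 : ι → ℕ) j * (β j).factorial := by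
    intro j
    rcases eq_or_ne j p with rfl | hj
    · simp [Nat.factorial_succ]
    · simp [hj]
  rw [Finset.prod_congr rfl fun j _ => hfac j, Finset.prod_mul_distrib,
    Fintype.prod_eq_single p fun j hj => by simp [hj]]
  simp

lemma sum_add_single (β : ι → ℕ) (p : ι) : ∑ j, (β + Pi.single p 1 : ι → ℕ) j = ∑ j, β j + 1 := by
  simp [Finset.sum_add_distrib]

end PiSingle

section Partitions

variable {k : ℕ}

def weight (α : Fin k → ℕ) : ℕ := ∑ j, (j.1 + 1) * α j

lemma mul_le_weight (α : Fin k → ℕ) (j : Fin k) : (j.1 + 1) * α j ≤ weight α :=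
  Finset.single_le_sum (f := fun j : Fin k => (j.1 + 1) * α j) (fun _ _ => Nat.zero_le _)
    (Finset.mem_univ j)

lemma weight_add (α β : Fin k → ℕ) : weight (α + β) = weight α + weight β := by
  simp only [weight, Pi.add_apply, mul_add, Finset.sum_add_distrib]

lemma weight_single (p : Fin k) : weight (Pi.single p 1) = p.1 + 1 := by
  rw [weight, Fintype.sum_eq_single p fun j hj => by simp [hj]]
  simp

lemma mem_partitions {n : ℕ} {α : Fin k → ℕ} : α ∈ partitions k n ↔ weight α = n := by
  refine ⟨fun h => (Finset.mem_filter.1 h).2, fun h => Finset.mem_filter.2 ⟨?_, h⟩⟩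
  refine Fintype.mem_piFinset.2 fun j => Finset.mem_range.2 ?_
  have := mul_le_weight α j
  nlinarith

lemma partitions_zero : partitions k 0 = {0} := by
  ext α
  simp [mem_partitions, weight, funext_iff]

lemma sum_partitions_filter_pos_sub_single {M : Type*} [AddCommMonoid M]
    (f : (Fin k → ℕ) → M) (p : Fin k) (n : ℕ) :
    ∑ α ∈ (partitions k n).filter (0 < · p), f (α - Pi.single p 1)
      = if p.1 + 1 ≤ n then ∑ β ∈ partitions k (n - (p.1 + 1)), f β else 0 := by
  split_ifs with hpn
  · obtain ⟨m, rfl⟩ : ∃ m, n = m + (p.1 + 1) := ⟨n - (p.1 + 1), by omega⟩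
    rw [Nat.add_sub_cancel]
    refine Finset.sum_nbij' (· - Pi.single p 1) (· + Pi.single p 1) ?_ ?_ ?_ ?_ fun _ _ => rfl
    · intro α hα
      rw [Finset.mem_filter, mem_partitions] at hα
      rw [mem_partitions]
      have := weight_add (α - Pi.single p 1) (Pi.single p 1)
      rw [sub_single_add_single hα.2, weight_single] at this
      omega
    · intro β hβ
      rw [mem_partitions] at hβ
      simp [mem_partitions, weight_add, weight_single, hβ]
    · intro α hα
      exact sub_single_add_single (Finset.mem_filter.1 hα).2
    · intro β _
      exact add_tsub_cancel_right β _
  · refine Finset.sum_eq_zero fun α hα => absurd ?_ hpn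
    rw [Finset.mem_filter, mem_partitions] at hα
    have := mul_le_weight α p
    nlinarith

end Partitions

section FqTerm

variable {k : ℕ} (q : ℚ)

lemma B_succ (m : ℕ) : B q (m + 1) = B q m * (q + m) := Finset.prod_range_succ _ _

noncomputable def fqTerm (α : Fin k → ℕ) : MvPolynomial (Fin k) ℚ :=
  C (B q (∑ j, α j) / ∏ j, ((α j).factorial : ℚ)) * ∏ j, X j ^ α j

lemma Fq_eq_sum_fqTerm (n : ℕ) : Fq k q n = ∑ α ∈ partitions k n, fqTerm q α := by
  rcases eq_or_ne n 0 with rfl | hn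
  · simp [Fq, partitions_zero, fqTerm, B]
  · rw [Fq, if_neg hn]
    rfl

lemma X_mul_fqTerm_sub_single {α : Fin k → ℕ} {p : Fin k} (hp : 0 < α p) :
    X p * fqTerm q (α - Pi.single p 1)
      = C (α p * B q (∑ j, α j - 1) / ∏ j, ((α j).factorial : ℚ)) * ∏ j, X j ^ α j := by
  obtain ⟨β, rfl⟩ : ∃ β : Fin k → ℕ, α = β + Pi.single p 1 := ⟨_, (sub_single_add_single hp).symm⟩
  rw [add_tsub_cancel_right, sum_add_single, Nat.add_sub_cancel, prod_pow_add_single,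
    ← Nat.cast_prod, prod_factorial_add_single, fqTerm, mul_left_comm]
  congr 2
  simp only [Pi.add_apply, Pi.single_eq_same, Nat.cast_add, Nat.cast_one, Nat.cast_mul,
    Nat.cast_prod]
  field_simp

lemma sum_mul_apply_of_weight_eq {α : Fin k → ℕ} {n : ℕ} (hα : weight α = n + 1) :
    ∑ p : Fin k, ((((p : ℕ) : ℚ) + 1) * q + n - p) * α p = (n + 1) * (q + ∑ j, α j - 1) := by
  have hw : ∑ p : Fin k, (((p : ℕ) : ℚ) + 1) * α p = n + 1 := by exact_mod_cast hα
  calc ∑ p : Fin k, ((((p : ℕ) : ℚ) + 1) * q + n - p) * α p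
      = (q - 1) * ∑ p : Fin k, (((p : ℕ) : ℚ) + 1) * α p + (n + 1) * ∑ p, (α p : ℚ) := by
        simp only [Finset.mul_sum, ← Finset.sum_add_distrib]
        exact Finset.sum_congr rfl fun p _ => by ring
    _ = (n + 1) * (q + ∑ j, α j - 1) := by rw [hw]; push_cast; ring

lemma C_mul_fqTerm_eq_sum {α : Fin k → ℕ} {n : ℕ} (hα : weight α = n + 1) :
    C ((n : ℚ) + 1) * fqTerm q α = ∑ p ∈ Finset.univ.filter (0 < α ·),
      C ((((p : ℕ) : ℚ) + 1) * q + n - p) * X p * fqTerm q (α - Pi.single p 1) := by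
  obtain ⟨s, hs⟩ : ∃ s, ∑ j, α j = s + 1 := Nat.exists_eq_add_one_of_ne_zero fun h => by
    simp [weight, Finset.sum_eq_zero_iff.1 h] at hα
  calc C ((n : ℚ) + 1) * fqTerm q α
      = C ((n + 1) * B q (s + 1) / ∏ j, ((α j).factorial : ℚ)) * ∏ j, X j ^ α j := by
        rw [fqTerm, hs, ← mul_assoc, ← map_mul, mul_div_assoc]
    _ = ∑ p : Fin k, C ((((p : ℕ) : ℚ) + 1) * q + n - p)
          * C (α p * B q s / ∏ j, ((α j).factorial : ℚ)) * ∏ j, X j ^ α j := by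
        simp only [← map_mul, ← Finset.sum_mul, ← map_sum, mul_div_assoc, ← mul_assoc]
        rw [sum_mul_apply_of_weight_eq q hα, hs, B_succ]
        congr 2
        push_cast
        ring
    _ = _ := by
        refine (Finset.sum_filter_of_ne fun p _ hp => Nat.pos_of_ne_zero fun h => hp ?_).symm.trans
          (Finset.sum_congr rfl fun p hp => ?_)
        · simp [h]
        · rw [mul_assoc _ (X p), X_mul_fqTerm_sub_single q (Finset.mem_filter.1 hp).2, hs,
            Nat.add_sub_cancel, mul_assoc]

end FqTerm

section Recurrence

variable {k : ℕ} (q : ℚ)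

lemma tQ_eq_zero {m : ℕ} (h : k ≤ m) : tQ k m = 0 := dif_neg (by omega)

lemma sum_X_mul_ite_eq_sum_range_tQ (g : ℕ → MvPolynomial (Fin k) ℚ) (n : ℕ) :
    ∑ p : Fin k, X p * (if p.1 ≤ n then g p else 0) = ∑ p ∈ Finset.range (n + 1), tQ k p * g p := by
  have hX : ∀ p : Fin k, X p = tQ k p := fun p => by simp [tQ]
  simp only [hX, mul_ite, mul_zero]
  rw [Fin.sum_univ_eq_sum_range (fun p => if p ≤ n then tQ k p * g p else 0), ← Finset.sum_filter,
    ← Finset.sum_filter_of_ne (s := Finset.range (n + 1)) (p := (· < k)) fun p _ hp => ?_]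
  · congr 1
    ext p
    simp only [Finset.mem_filter, Finset.mem_range]
    omega
  · by_contra hpk
    exact hp (by rw [tQ_eq_zero (not_lt.1 hpk), zero_mul])

theorem C_mul_Fq_succ (n : ℕ) :
    C ((n : ℚ) + 1) * Fq k q (n + 1)
      = ∑ j : Fin (n + 1), C (((n - j + 1 : ℕ) : ℚ) * q + j) * tQ k (n - j) * Fq k q j := by
  calc C ((n : ℚ) + 1) * Fq k q (n + 1)
      = ∑ α ∈ partitions k (n + 1), ∑ p ∈ Finset.univ.filter (0 < α ·),
          C ((((p : ℕ) : ℚ) + 1) * q + n - p) * X p * fqTerm q (α - Pi.single p 1) := by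
        rw [Fq_eq_sum_fqTerm, Finset.mul_sum]
        exact Finset.sum_congr rfl fun α hα => C_mul_fqTerm_eq_sum q (mem_partitions.1 hα)
    _ = ∑ p : Fin k, X p *
          (if p.1 ≤ n then C ((((p : ℕ) : ℚ) + 1) * q + n - p) * Fq k q (n - p) else 0) := by
        rw [Finset.sum_comm' (t' := Finset.univ)
          (s' := fun p => (partitions k (n + 1)).filter (0 < · p)) (by simp)]
        refine Finset.sum_congr rfl fun p _ => ?_
        rw [← Finset.mul_sum, sum_partitions_filter_pos_sub_single, ← Fq_eq_sum_fqTerm,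
          Nat.add_sub_add_right]
        by_cases hp : p.1 ≤ n
        · simp only [hp, add_le_add_iff_right, if_true]
          ring
        · simp [hp]
    _ = ∑ p ∈ Finset.range (n + 1), tQ k p * (C (((p : ℚ) + 1) * q + n - p) * Fq k q (n - p)) :=
        sum_X_mul_ite_eq_sum_range_tQ (fun p => C (((p : ℚ) + 1) * q + n - p) * Fq k q (n - p)) n
    _ = _ := by
        rw [Fin.sum_univ_eq_sum_range
          (fun j => C (((n - j + 1 : ℕ) : ℚ) * q + j) * tQ k (n - j) * Fq k q j),
          ← Finset.sum_range_reflect]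
        refine Finset.sum_congr rfl fun p hp => ?_
        have hpn : p ≤ n := Nat.lt_succ_iff.1 (Finset.mem_range.1 hp)
        rw [Nat.add_sub_cancel, Nat.sub_sub_self hpn]
        simp only [map_add, map_sub, map_mul, map_natCast, map_one, Nat.cast_sub hpn, Nat.cast_add,
          Nat.cast_one]
        ring

end Recurrence

section StirlingMatrix

variable {k : ℕ} {q : ℚ}

noncomputable def stirlingEntry (k : ℕ) (q : ℚ) (i j : ℕ) : MvPolynomial (Fin k) ℚ :=
  C ((((i - j + 1 : ℕ) : ℚ) * q + j) / (i + 1)) * tQ k (i - j)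

lemma B_ne_zero {m : ℕ} (h : ∀ i < m, q + i ≠ 0) : B q m ≠ 0 :=
  Finset.prod_ne_zero_iff.2 fun i hi => h i (Finset.mem_range.1 hi)

lemma Smat_eq_hessenberg {n : ℕ} (hq : ∀ m : ℕ, m + 2 ≤ n → q + m ≠ 0) :
    Smat k n q = hessenberg (stirlingEntry k q) n := by
  refine Matrix.ext fun i j => ?_
  simp only [Smat, hessenberg, Matrix.of_apply, stirlingEntry]
  rcases Nat.eq_zero_or_pos j with hj | hj
  · rw [if_pos hj, if_pos (by omega), hj, Nat.sub_zero]
    congr 2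
    rw [eq_div_iff (by positivity)]
    push_cast
    ring
  · rw [if_neg hj.ne']
    by_cases hji : j.1 ≤ i.1
    · rw [if_pos hji, if_pos hji]
      have hB : B q j ≠ 0 := B_ne_zero fun m hm => hq m (by omega)
      rw [B_succ, mul_div_cancel_left₀ _ hB]
      congr 3
      push_cast [Nat.cast_sub hji]
      ring
    · simp only [if_neg hji]

theorem det_hessenberg_stirlingEntry (n : ℕ) : (hessenberg (stirlingEntry k q) n).det = Fq k q n := by
  induction n using Nat.strong_induction_on with
  | _ n ih =>
    rcases n with _ | n
    · simp [Fq]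
    have hn : ((n : ℚ) + 1) ≠ 0 := by positivity
    calc (hessenberg (stirlingEntry k q) (n + 1)).det
        = C ((n : ℚ) + 1)⁻¹ * ∑ j : Fin (n + 1),
            C (((n - j + 1 : ℕ) : ℚ) * q + j) * tQ k (n - j) * Fq k q j := by
          rw [det_hessenberg_succ, Finset.mul_sum]
          refine Finset.sum_congr rfl fun j _ => ?_
          rw [ih j (by omega), stirlingEntry, div_eq_inv_mul, map_mul]
          ring
      _ = Fq k q (n + 1) := by
          rw [← C_mul_Fq_succ, ← mul_assoc, ← map_mul, inv_mul_cancel₀ hn, map_one, one_mul]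

end StirlingMatrix

theorem det_Smat_eq_Fq_general (k n : ℕ) (q : ℚ)
    (hq : ∀ m : ℕ, (m : ℤ) ≤ (n : ℤ) - 2 → q + (m : ℚ) ≠ 0) :
    (Smat k n q).det = Fq k q n := by
  rw [Smat_eq_hessenberg fun m hm => hq m (by omega), det_hessenberg_stirlingEntry]

theorem det_Smat_eq_Fq (k n : ℕ) (hk : 1 ≤ k) (hn : 1 ≤ n) (q : ℚ)
    (hq : ∀ m : ℕ, (m : ℤ) ≤ (n : ℤ) - 2 → q + (m : ℚ) ≠ 0) :
    (Smat k n q).det = Fq k q n :=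
  det_Smat_eq_Fq_general k n q hq
end

section
/- Let k ≥ 1 and q, q' ∈ ℚ. For every n ≥ 0, the convolution of the sequences (F^q_{k,m})_m and (F^{q'}_{k,m})_m in degree n equals F^{q+q'}_{k,n}; that is, Σ_{j=0}^{n} F^q_{k,j} · F^{q'}_{k,n−j} = F^{q+q'}_{k,n} in ℚ[t₁,…,t_k]. -/
/-!
The generating function of `F^q_{k,·}` is `(1 - ∑ⱼ tⱼ xʲ)^(-q)`. Monomial by monomial this says
that the coefficient of `t^α` in `F^q_{k,n}` (for `α` of weight `n`) is the coefficient of `t^α` in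
`(1 - s)^(-q) = ∑ₘ multichoose(q, m) sᵐ` with `s = t₁ + ⋯ + t_k`, namely
`multichoose(q, |α|) · multinomial(α)`. Comparing coefficients of `t^α`, the convolution identity
becomes `(1 - s)^(-q) (1 - s)^(-q') = (1 - s)^(-(q + q'))`, i.e. the Chu–Vandermonde identity for
`multichoose`; truncating the series in degree `|α|` keeps everything polynomial.
-/

open Finset MvPolynomial

namespace Ring

variable {R : Type*} [CommRing R] [BinomialRing R]

theorem choose_neg_eq_neg_one_pow_mul_multichoose (r : R) (n : ℕ) :
    choose (-r) n = (-1) ^ n * multichoose r n := by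
  rw [choose_neg', Units.smul_def, Int.negOnePow_def, zsmul_eq_mul]
  simp

theorem multichoose_add (r s : R) (n : ℕ) :
    multichoose (r + s) n = ∑ ij ∈ antidiagonal n, multichoose r ij.1 * multichoose s ij.2 := by
  have h := add_choose_eq n (Commute.all (-r) (-s))
  simp only [← neg_add, choose_neg_eq_neg_one_pow_mul_multichoose] at h
  refine ((isUnit_neg_one.pow n).mul_right_inj).mp ?_
  rw [h, mul_sum]
  refine sum_congr rfl fun ij hij => ?_
  rw [← mem_antidiagonal.mp hij, pow_add]
  ring

end Ring

section MultinomialVandermonde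

variable {σ R : Type*} [Fintype σ]

theorem MvPolynomial.coeff_sum_X_pow_eq_ite_degree [CommSemiring R] (d : σ →₀ ℕ) (n : ℕ) :
    coeff d ((∑ i, X i : MvPolynomial σ R) ^ n) =
      if d.degree = n then (d.multinomial : R) else 0 := by
  rw [coeff_sum_X_pow_of_fintype, Nat.cast_ite, Nat.cast_zero]
  rfl

variable [CommRing R] [BinomialRing R]

theorem MvPolynomial.coeff_sum_multichoose_mul_sum_X_pow (r : R) {N : ℕ} {d : σ →₀ ℕ}
    (hd : d.degree ≤ N) :
    coeff d (∑ m ∈ range (N + 1), C (Ring.multichoose r m) * (∑ i, X i) ^ m) =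
      Ring.multichoose r d.degree * d.multinomial := by
  simp only [coeff_sum, coeff_C_mul, coeff_sum_X_pow_eq_ite_degree, mul_ite, mul_zero]
  rw [sum_ite_eq, if_pos (mem_range_succ_iff.mpr hd)]

theorem sum_antidiagonal_multichoose_mul_multinomial [DecidableEq σ] (r s : R) (d : σ →₀ ℕ) :
    ∑ x ∈ antidiagonal d, (Ring.multichoose r x.1.degree * x.1.multinomial) *
        (Ring.multichoose s x.2.degree * x.2.multinomial) =
      Ring.multichoose (r + s) d.degree * d.multinomial := by
  set N := d.degree
  -- `(1 - ∑ i, X i) ^ (-r)`, truncated in degree `N`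
  let P : R → MvPolynomial σ R := fun r =>
    ∑ m ∈ range (N + 1), C (Ring.multichoose r m) * (∑ i, X i) ^ m
  calc _ = coeff d (P r * P s) := by
        rw [coeff_mul]
        refine sum_congr rfl fun x hx => ?_
        have hdeg : x.1.degree + x.2.degree = N := by
          rw [← map_add, mem_antidiagonal.mp hx]
        rw [coeff_sum_multichoose_mul_sum_X_pow r (by omega),
          coeff_sum_multichoose_mul_sum_X_pow s (by omega)]
    _ = ∑ m ∈ range (N + 1), ∑ m' ∈ range (N + 1),
          Ring.multichoose r m * Ring.multichoose s m' *
            if N = m + m' then (d.multinomial : R) else 0 := by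
        simp only [P, sum_mul_sum, coeff_sum]
        refine sum_congr rfl fun m _ => sum_congr rfl fun m' _ => ?_
        rw [mul_mul_mul_comm, ← map_mul, ← pow_add, coeff_C_mul, coeff_sum_X_pow_eq_ite_degree]
    _ = ∑ m ∈ range (N + 1), Ring.multichoose r m * Ring.multichoose s (N - m) * d.multinomial := by
        refine sum_congr rfl fun m hm => ?_
        have hmN := mem_range_succ_iff.mp hm
        simp only [mul_ite, mul_zero, show ∀ m', N = m + m' ↔ N - m = m' by omega]
        rw [sum_ite_eq, if_pos (mem_range_succ_iff.mpr (Nat.sub_le N m))]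
    _ = _ := by
        rw [Ring.multichoose_add, sum_mul, Nat.sum_antidiagonal_eq_sum_range_succ_mk]

end MultinomialVandermonde

theorem B_eq_factorial_mul_multichoose (q : ℚ) (m : ℕ) :
    B q m = m.factorial * Ring.multichoose q m := by
  rw [← nsmul_eq_mul, Ring.factorial_nsmul_multichoose_eq_ascPochhammer,
    Polynomial.ascPochhammer_smeval_eq_eval]
  induction m with
  | zero => simp [B]
  | succ m ih => rw [B, prod_range_succ, ← B, ih, ascPochhammer_succ_eval]

theorem B_div_prod_factorial {σ : Type*} [Fintype σ] (q : ℚ) (d : σ →₀ ℕ) :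
    B q (∑ i, d i) / ∏ i, ((d i).factorial : ℚ) = Ring.multichoose q d.degree * d.multinomial := by
  have hspec := Nat.multinomial_spec univ d
  rw [← Finsupp.multinomial_eq_of_support_subset (subset_univ d.support)] at hspec
  have hfac : (∏ i, ((d i).factorial : ℚ)) ≠ 0 :=
    prod_ne_zero_iff.mpr fun i _ => by exact_mod_cast (d i).factorial_ne_zero
  rw [B_eq_factorial_mul_multichoose, ← hspec, ← Finsupp.degree_eq_sum]
  push_cast
  field_simp

theorem mem_partitions_iff {k n : ℕ} {α : Fin k → ℕ} :
    α ∈ partitions k n ↔ ∑ j : Fin k, (j.1 + 1) * α j = n := by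
  refine ⟨fun h => (mem_filter.mp h).2, fun h => mem_filter.mpr ⟨?_, h⟩⟩
  refine Fintype.mem_piFinset.mpr fun j => mem_range_succ_iff.mpr ?_
  rw [← h]
  calc α j ≤ (j.1 + 1) * α j := Nat.le_mul_of_pos_left _ j.1.succ_pos
    _ ≤ _ := single_le_sum (f := fun i : Fin k => (i.1 + 1) * α i) (by simp) (mem_univ j)

theorem coeff_Fq {k : ℕ} (q : ℚ) (n : ℕ) (d : Fin k →₀ ℕ) :
    coeff d (Fq k q n) =
      if Finsupp.weight (fun j : Fin k => j.1 + 1) d = n then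
        Ring.multichoose q d.degree * d.multinomial
      else 0 := by
  rcases eq_or_ne n 0 with rfl | hn
  · have : Finsupp.NonTorsionWeight ℕ (fun j : Fin k => j.1 + 1) :=
      Finsupp.nonTorsionWeight_of ℕ _ fun j => j.1.succ_ne_zero
    simp only [Fq, if_pos, coeff_one, Finsupp.weight_eq_zero_iff_eq_zero]
    by_cases hd : d = 0 <;> simp [hd, Finsupp.multinomial_eq, eq_comm]
  · have hmonomial : ∀ α : Fin k → ℕ, ∀ a : ℚ,
        C a * ∏ j, X j ^ α j = monomial (Finsupp.equivFunOnFinite.symm α) a := fun α a => by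
      rw [monomial_eq, Finsupp.prod_fintype _ _ (fun _ => pow_zero _)]
      rfl
    simp only [Fq, if_neg hn, hmonomial, coeff_sum, coeff_monomial, Equiv.symm_apply_eq]
    rw [sum_ite_eq']
    simp only [Finsupp.equivFunOnFinite_apply, mem_partitions_iff, Finsupp.weight_eq_sum,
      B_div_prod_factorial, smul_eq_mul, mul_comm]

theorem sum_range_ite_mul_ite_sub {R : Type*} [NonUnitalNonAssocSemiring R] (a b n : ℕ) (u v : R) :
    ∑ j ∈ range (n + 1), (if a = j then u else 0) * (if b = n - j then v else 0) =
      if a + b = n then u * v else 0 := by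
  simp only [ite_mul, zero_mul, sum_ite_eq, mem_range_succ_iff]
  by_cases h : a + b = n
  · rw [if_pos (by omega), if_pos (by omega), if_pos h]
  · by_cases ha : a ≤ n
    · rw [if_pos ha, if_neg (by omega), if_neg h, mul_zero]
    · rw [if_neg ha, if_neg h]

theorem Fq_convolution_add_general (k : ℕ) (q q' : ℚ) (n : ℕ) :
    ∑ j ∈ Finset.range (n + 1), Fq k q j * Fq k q' (n - j) = Fq k (q + q') n := by
  ext d
  simp only [coeff_sum, coeff_mul, coeff_Fq]
  rw [sum_comm, ← sum_antidiagonal_multichoose_mul_multinomial, ite_sum_zero]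
  refine sum_congr rfl fun x hx => ?_
  rw [sum_range_ite_mul_ite_sub, ← map_add, mem_antidiagonal.mp hx]

theorem Fq_convolution_add (k : ℕ) (hk : 1 ≤ k) (q q' : ℚ) (n : ℕ) :
    ∑ j ∈ Finset.range (n + 1), Fq k q j * Fq k q' (n - j) = Fq k (q + q') n :=
  Fq_convolution_add_general k q q' n
end
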